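/- Let Q be a stably supported quantale with support ς and unit e. Then ς(a b) = a ς b for all a, b ∈ Q with a ≤ e. -/

import Mathlib

/-!
Elements below the unit are fixed by the support: `x ≤ ς x · x ≤ ς x · e = ς x` and
`ς x ≤ x x* ≤ x e* = x`. For `a ≤ e`, stability gives `ς(ab) ≤ ς a = a`, and `ab ≤ b` gives
`ς(ab) ≤ ς b`, so `ς(ab) ≤ ς(ς(ab)) · ς(ab) = ς(ab) · ς(ab) ≤ a · ς b`. Conversely `a · ς b ≤ e`,
hence `a · ς b = ς(a · ς b) ≤ ς(a b b*) ≤ ς(ab)`, again by stability.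
-/

theorem monotone_of_map_sSup {α β : Type*} [CompleteLattice α] [CompleteLattice β] {f : α → β}
    (h : ∀ T : Set α, f (sSup T) = sSup (f '' T)) : Monotone f :=
  OrderHomClass.mono (⟨f, h⟩ : sSupHom α β)

theorem star_unit_eq_unit {M : Type*} {m : M → M → M} {e : M} {st : M → M}
    (her : ∀ a : M, m a e = a) (hstst : ∀ a : M, st (st a) = a)
    (hstm : ∀ a b : M, st (m a b) = m (st b) (st a)) : st e = e := by
  have hleft : ∀ b : M, m (st e) b = b := fun b => by
    simpa only [her, hstst] using (hstm (st b) e).symm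
  rw [← her (st e), hleft]

section

variable {Q : Type*} [PartialOrder Q] {m : Q → Q → Q} {e : Q} {st sp : Q → Q}

theorem support_eq_self_of_le_unit (hmono : ∀ a : Q, Monotone (m a)) (her : ∀ a : Q, m a e = a)
    (hst_mono : Monotone st) (hste : st e = e) (hsp2 : ∀ a : Q, sp a ≤ m a (st a))
    (hsp3 : ∀ a : Q, a ≤ m (sp a) a) {x : Q} (hx : x ≤ e) : sp x = x :=
  le_antisymm
    (calc sp x ≤ m x (st x) := hsp2 x
      _ ≤ m x (st e) := hmono x (hst_mono hx)
      _ = x := by rw [hste, her])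
    (calc x ≤ m (sp x) x := hsp3 x
      _ ≤ m (sp x) e := hmono _ hx
      _ = sp x := her _)

theorem support_mul_le_mul_support (hmono_left : ∀ b : Q, Monotone (m · b))
    (hmono_right : ∀ a : Q, Monotone (m a)) (hel : ∀ a : Q, m e a = a) (hsp_mono : Monotone sp)
    (hfix : ∀ x ≤ e, sp x = x) (hstable : ∀ a b : Q, sp (m a b) ≤ sp a)
    (hsp1 : ∀ a : Q, sp a ≤ e) (hsp3 : ∀ a : Q, a ≤ m (sp a) a)
    {a : Q} (ha : a ≤ e) (b : Q) : sp (m a b) ≤ m a (sp b) := by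
  have hle_a : sp (m a b) ≤ a := (hstable a b).trans (hfix a ha).le
  have hle_b : sp (m a b) ≤ sp b := hsp_mono <| (hmono_left b ha).trans (hel b).le
  calc sp (m a b) ≤ m (sp (sp (m a b))) (sp (m a b)) := hsp3 _
    _ = m (sp (m a b)) (sp (m a b)) := by rw [hfix _ (hsp1 _)]
    _ ≤ m a (sp b) := (hmono_left _ hle_a).trans (hmono_right a hle_b)

theorem mul_support_le_support_mul (hmono_left : ∀ b : Q, Monotone (m · b))
    (hmono_right : ∀ a : Q, Monotone (m a)) (hel : ∀ a : Q, m e a = a)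
    (hassoc : ∀ a b c : Q, m (m a b) c = m a (m b c)) (hsp_mono : Monotone sp)
    (hfix : ∀ x ≤ e, sp x = x) (hstable : ∀ a b : Q, sp (m a b) ≤ sp a)
    (hsp1 : ∀ a : Q, sp a ≤ e) (hsp2 : ∀ a : Q, sp a ≤ m a (st a))
    {a : Q} (ha : a ≤ e) (b : Q) : m a (sp b) ≤ sp (m a b) := by
  have hle_e : m a (sp b) ≤ e :=
    (hmono_left _ ha).trans <| (hmono_right e (hsp1 b)).trans (hel e).le
  calc m a (sp b) = sp (m a (sp b)) := (hfix _ hle_e).symm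
    _ ≤ sp (m a (m b (st b))) := hsp_mono (hmono_right a (hsp2 b))
    _ = sp (m (m a b) (st b)) := by rw [hassoc]
    _ ≤ sp (m a b) := hstable _ _

end

/-- In a stably supported quantale, `ς(a b) = a ς b` whenever `a ≤ e`
(Lemma `prop:strongsupp`-2). -/
theorem stmt_4 {Q : Type*} [CompleteLattice Q]
    (m : Q → Q → Q) (e : Q) (st : Q → Q) (sp : Q → Q)
    (hassoc : ∀ a b c : Q, m (m a b) c = m a (m b c))
    (hdistl : ∀ (a : Q) (T : Set Q), m a (sSup T) = sSup ((fun b => m a b) '' T))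
    (hdistr : ∀ (b : Q) (T : Set Q), m (sSup T) b = sSup ((fun a => m a b) '' T))
    (hel : ∀ a : Q, m e a = a) (her : ∀ a : Q, m a e = a)
    (hstsup : ∀ T : Set Q, st (sSup T) = sSup (st '' T))
    (hstst : ∀ a : Q, st (st a) = a)
    (hstm : ∀ a b : Q, st (m a b) = m (st b) (st a))
    (hspsup : ∀ T : Set Q, sp (sSup T) = sSup (sp '' T))
    (hsp1 : ∀ a : Q, sp a ≤ e)
    (hsp2 : ∀ a : Q, sp a ≤ m a (st a))
    (hsp3 : ∀ a : Q, a ≤ m (sp a) a)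
    (hstable : ∀ a b : Q, sp (m a b) ≤ sp a) :
    ∀ a b : Q, a ≤ e → sp (m a b) = m a (sp b) := by
  have hmono_left : ∀ b, Monotone (m · b) := fun b => monotone_of_map_sSup (hdistr b)
  have hmono_right : ∀ a, Monotone (m a) := fun a => monotone_of_map_sSup (hdistl a)
  have hsp_mono : Monotone sp := monotone_of_map_sSup hspsup
  have hfix : ∀ x ≤ e, sp x = x := fun _ =>
    support_eq_self_of_le_unit hmono_right her (monotone_of_map_sSup hstsup)
      (star_unit_eq_unit her hstst hstm) hsp2 hsp3
  intro a b ha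
  exact le_antisymm
    (support_mul_le_mul_support hmono_left hmono_right hel hsp_mono hfix hstable hsp1 hsp3 ha b)
    (mul_support_le_support_mul hmono_left hmono_right hel hassoc hsp_mono hfix hstable hsp1 hsp2
      ha b)
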